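/- Let T₁, T₂ be X-trees and χ an optimal convex character for (T₁,T₂), convex on T₁, with |χ| ≥ 7·d_MP(T₁,T₂) − 4 states. Then the homoplasy score of χ on T₂ equals exactly d_MP(T₁,T₂); consequently, in the forest F₂ induced by any most parsimonious extension of χ to T₂, there are at least |χ| − d_MP unique states and at most 2·d_MP repeating components. -/

import Mathlib

/-!
Convexity on `T₁` gives `ℓ(T₁, χ) = |χ| - 1`. On the other side, the forest induced by any
extension of `χ` to `T₂` has at most one component more than the extension has mutation edges,
and every state of `χ` occurs on some component; hence `ℓ(T₂, χ) ≥ |χ| - 1`, so that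
`d_MP = ℓ(T₂, χ) - ℓ(T₁, χ)` is exactly the homoplasy score `h`.

For a most parsimonious extension the forest therefore has at most `|χ| + d_MP` components.
If `u` states occur on exactly one component and `r` on at least two, then `u + r ≥ |χ|` and
`u + 2r ≤ |χ| + d_MP`, whence `u ≥ |χ| - d_MP`; the remaining (repeating) components number at
most `(|χ| + d_MP) - u ≤ 2 d_MP`.
-/

open SimpleGraph

namespace PhyloMP

/-- The set of mutation edges of a vertex coloring `ω` of a graph:
edges whose two endpoints receive different states. -/
def mutationEdges {V C : Type} (g : SimpleGraph V) (ω : V → C) : Set (Sym2 V) :=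
  {e | e ∈ g.edgeSet ∧ ∃ u v : V, e = s(u, v) ∧ ω u ≠ ω v}

/-- An unrooted binary phylogenetic tree on taxon set `X`, with vertex set `V`:
a tree whose degree-1 vertices (leaves) are bijectively labeled by `X` and whose
other vertices have degree 3. -/
structure XTree (X V : Type) [Fintype V] where
  g : SimpleGraph V
  isTree : g.IsTree
  leaf : X → V
  leafInj : Function.Injective leaf
  leafDeg : ∀ x, (g.neighborSet (leaf x)).ncard = 1
  leavesOnly : ∀ v, (g.neighborSet v).ncard = 1 → ∃ x, leaf x = v
  internalDeg : ∀ v, (g.neighborSet v).ncard ≠ 1 → (g.neighborSet v).ncard = 3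

variable {X V C : Type} [Fintype V]

/-- `ω` extends the character `χ` to all vertices of `T`. -/
def IsExtension (T : XTree X V) (χ : X → C) (ω : V → C) : Prop :=
  ∀ x, ω (T.leaf x) = χ x

/-- The parsimony score `ℓ(T,χ)`: the minimum number of mutation edges over
all extensions of `χ` to `T`. -/
noncomputable def score (T : XTree X V) (χ : X → C) : ℕ :=
  sInf {n | ∃ ω : V → C, IsExtension T χ ω ∧ (mutationEdges T.g ω).ncard = n}

/-- A most parsimonious extension. -/
def IsMPExtension (T : XTree X V) (χ : X → C) (ω : V → C) : Prop :=
  IsExtension T χ ω ∧ (mutationEdges T.g ω).ncard = score T χ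

/-- `|χ|`: the number of states used by the character `χ`. -/
noncomputable def nStates {X C : Type} (χ : X → C) : ℕ := (Set.range χ).ncard

/-- `χ` is convex on `T`: its parsimony score equals its number of states minus one. -/
def IsConvex (T : XTree X V) (χ : X → C) : Prop := score T χ = nStates χ - 1

/-- The maximum parsimony distance between two `X`-trees. -/
noncomputable def dMP {V₁ V₂ : Type} [Fintype V₁] [Fintype V₂]
    (T₁ : XTree X V₁) (T₂ : XTree X V₂) : ℕ :=
  sSup {d | ∃ χ : X → ℕ, Nat.dist (score T₁ χ) (score T₂ χ) = d}

/-- A character achieving the maximum parsimony distance. -/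
def IsOptimal {V₁ V₂ : Type} [Fintype V₁] [Fintype V₂]
    (T₁ : XTree X V₁) (T₂ : XTree X V₂) (χ : X → C) : Prop :=
  Nat.dist (score T₁ χ) (score T₂ χ) = dMP T₁ T₂

/-- The forest induced by an extension `ω`: delete all mutation edges of `ω` from `T`. -/
noncomputable def forest (T : XTree X V) (ω : V → C) : SimpleGraph V :=
  T.g.deleteEdges (mutationEdges T.g ω)

/-- A connected component `c` of the forest `F` carries the state `s`. -/
def carries {V C : Type} (F : SimpleGraph V) (ω : V → C) (c : F.ConnectedComponent) (s : C) : Prop :=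
  ∃ v, F.connectedComponentMk v = c ∧ ω v = s

/-- The number of components of `F` carrying the state `s`. A state is *unique*
if this is 1 and *repeating* if this is at least 2. -/
noncomputable def stateMultiplicity {V C : Type} (F : SimpleGraph V) (ω : V → C) (s : C) : ℕ :=
  {c : F.ConnectedComponent | carries F ω c s}.ncard

/-- Relabel the state `A` as `B` in the character `χ`. -/
def relabel {X C : Type} [DecidableEq C] (χ : X → C) (A B : C) : X → C :=
  fun x => if χ x = A then B else χ x

/-- Two states `A`, `B` are adjacent (with respect to the coloring `ω`) if some edge of the
graph joins a vertex colored `A` to a vertex colored `B`; for distinct states, this edge is a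
mutation edge joining the corresponding components of the induced forest. -/
def statesAdjacent {V C : Type} (g : SimpleGraph V) (ω : V → C) (A B : C) : Prop :=
  ∃ u v, g.Adj u v ∧ ω u = A ∧ ω v = B

end PhyloMP

open scoped Finset

namespace Set

variable {α β : Type*}

lemma setOf_ncard_preimage_singleton_eq_one_subset_range (f : α → β) :
    {b | (f ⁻¹' {b}).ncard = 1} ⊆ range f := fun _ (hb : _ = 1) =>
  preimage_singleton_nonempty.mp (nonempty_of_ncard_ne_zero (by omega))

lemma two_mul_ncard_range_le [Finite α] (f : α → β) :
    2 * (range f).ncard ≤ Nat.card α + {b | (f ⁻¹' {b}).ncard = 1}.ncard := by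
  classical
  have := Fintype.ofFinite α
  have hfiber : ∀ b, (f ⁻¹' {b}).ncard = #{a | f a = b} := fun b => by
    rw [← ncard_coe_finset]; congr 1; ext; simp
  have hrange : range f = ↑(Finset.univ.image f) := by simp
  have hunique : {b | (f ⁻¹' {b}).ncard = 1} =
      ↑{b ∈ Finset.univ.image f | (f ⁻¹' {b}).ncard = 1} := by
    ext b
    rw [Finset.coe_filter]
    exact ⟨fun h => ⟨by simpa using setOf_ncard_preimage_singleton_eq_one_subset_range f h, h⟩,
      And.right⟩
  rw [hrange, hunique, ncard_coe_finset, ncard_coe_finset, Nat.card_eq_fintype_card,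
    ← Finset.card_univ, Finset.card_eq_sum_card_image f Finset.univ, Finset.card_filter,
    ← Finset.sum_add_distrib, mul_comm, ← smul_eq_mul, ← Finset.sum_const]
  refine Finset.sum_le_sum fun b hb => ?_
  obtain ⟨a, -, rfl⟩ := Finset.mem_image.mp hb
  have := (ncard_pos (toFinite _)).mpr (⟨a, rfl⟩ : (f ⁻¹' {f a}).Nonempty)
  rw [hfiber] at this ⊢
  split_ifs <;> omega

lemma ncard_setOf_two_le_add_ncard_setOf_eq_one [Finite α] (f : α → β) :
    {a | 2 ≤ (f ⁻¹' {f a}).ncard}.ncard + {b | (f ⁻¹' {b}).ncard = 1}.ncard = Nat.card α := by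
  set U := {b | (f ⁻¹' {b}).ncard = 1}
  have hcompl : {a | 2 ≤ (f ⁻¹' {f a}).ncard} = (f ⁻¹' U)ᶜ := by
    ext a
    have := (ncard_pos (toFinite _)).mpr (⟨a, rfl⟩ : (f ⁻¹' {f a}).Nonempty)
    change 2 ≤ _ ↔ ¬(f ⁻¹' {f a}).ncard = 1
    omega
  have hinj : InjOn f (f ⁻¹' U) := fun a (ha : _ = 1) a' _ h => by
    obtain ⟨c, hc⟩ := ncard_eq_one.mp ha
    have h₁ : a ∈ f ⁻¹' {f a} := rfl
    have h₂ : a' ∈ f ⁻¹' {f a} := h.symm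
    rw [hc] at h₁ h₂
    exact h₁.trans h₂.symm
  have hU : U ⊆ range f := setOf_ncard_preimage_singleton_eq_one_subset_range f
  have hcard : U.ncard = (f ⁻¹' U).ncard := by
    rw [← hinj.ncard_image, image_preimage_eq_of_subset hU]
  rw [hcompl, hcard, add_comm, ncard_add_ncard_compl]

end Set

namespace SimpleGraph

variable {V : Type*} {G : SimpleGraph V}

lemma Reachable.apply_eq_of_forall_adj {C : Type*} {ω : V → C}
    (hω : ∀ u v, G.Adj u v → ω u = ω v) {u v : V} (h : G.Reachable u v) : ω u = ω v := by
  obtain ⟨p⟩ := h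
  induction p with
  | nil => rfl
  | cons hadj _ ih => exact (hω _ _ hadj).trans ih

lemma Reachable.reachable_deleteEdges_singleton_or {a b u v : V} (h : G.Reachable u v) :
    (G.deleteEdges {s(a, b)}).Reachable u v ∨
      ((G.deleteEdges {s(a, b)}).Reachable u a ∧ (G.deleteEdges {s(a, b)}).Reachable b v) ∨
      ((G.deleteEdges {s(a, b)}).Reachable u b ∧ (G.deleteEdges {s(a, b)}).Reachable a v) := by
  obtain ⟨p⟩ := h
  induction p with
  | nil => exact Or.inl .rfl
  | @cons u w v hadj _ ih =>
    by_cases he : s(u, w) = s(a, b)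
    · rcases Sym2.eq_iff.mp he with ⟨rfl, rfl⟩ | ⟨rfl, rfl⟩
      · rcases ih with h | ⟨h₁, h₂⟩ | ⟨-, h₂⟩
        exacts [Or.inr (Or.inl ⟨.rfl, h⟩), Or.inl (h₁.symm.trans h₂), Or.inl h₂]
      · rcases ih with h | ⟨-, h₂⟩ | ⟨h₁, h₂⟩
        exacts [Or.inr (Or.inr ⟨.rfl, h⟩), Or.inl h₂, Or.inl (h₁.symm.trans h₂)]
    · have huw : (G.deleteEdges {s(a, b)}).Reachable u w :=
        (deleteEdges_adj.mpr ⟨hadj, he⟩).reachable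
      rcases ih with h | ⟨h₁, h₂⟩ | ⟨h₁, h₂⟩
      exacts [Or.inl (huw.trans h), Or.inr (Or.inl ⟨huw.trans h₁, h₂⟩),
        Or.inr (Or.inr ⟨huw.trans h₁, h₂⟩)]

lemma card_connectedComponent_deleteEdges_singleton_le [Finite V] (G : SimpleGraph V)
    (e : Sym2 V) :
    Nat.card (G.deleteEdges {e}).ConnectedComponent ≤ Nat.card G.ConnectedComponent + 1 := by
  classical
  induction e using Sym2.ind with
  | _ a b =>
  set H := G.deleteEdges {s(a, b)}
  -- a component of `H` other than that of `a` is determined by the component of `G` around it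
  let ψ : H.ConnectedComponent → Option G.ConnectedComponent := fun c =>
    if c = H.connectedComponentMk a then none else some (c.map (Hom.ofLE (deleteEdges_le _)))
  have hψ : Function.Injective ψ := by
    refine ConnectedComponent.ind₂ fun u v huv => ?_
    by_cases hu : H.connectedComponentMk u = H.connectedComponentMk a <;>
      by_cases hv : H.connectedComponentMk v = H.connectedComponentMk a <;>
      simp only [ψ, hu, hv, if_true, if_false, reduceCtorEq, Option.some_inj,
        ConnectedComponent.eq] at huv ⊢
    have huv : G.Reachable u v := ConnectedComponent.eq.mp huv
    rcases huv.reachable_deleteEdges_singleton_or (a := a) (b := b) with h | ⟨h, -⟩ | ⟨-, h⟩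
    exacts [h, absurd (ConnectedComponent.eq.mpr h) hu,
      absurd (ConnectedComponent.eq.mpr h.symm) hv]
  simpa using Nat.card_le_card_of_injective ψ hψ

lemma card_connectedComponent_deleteEdges_le [Finite V] (G : SimpleGraph V)
    (s : Set (Sym2 V)) :
    Nat.card (G.deleteEdges s).ConnectedComponent ≤ Nat.card G.ConnectedComponent + s.ncard := by
  induction s, s.toFinite using Set.Finite.induction_on with
  | empty => simp
  | @insert e s he hs ih =>
    rw [← Set.union_singleton, ← deleteEdges_deleteEdges, Set.union_singleton,
      Set.ncard_insert_of_notMem he hs]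
    have := card_connectedComponent_deleteEdges_singleton_le (G.deleteEdges s) e
    omega

end SimpleGraph

namespace PhyloMP

open Set

variable {X V C : Type} [Fintype V]

lemma XTree.nonempty_taxa (T : XTree X V) : Nonempty X := by
  classical
  obtain ⟨v⟩ := T.isTree.connected.nonempty
  rcases subsingleton_or_nontrivial V with hV | hV
  · -- a single vertex has degree `0`, which is neither `1` nor `3`
    have hv : T.g.neighborSet v = ∅ :=
      eq_empty_of_forall_notMem fun w hw => T.g.ne_of_adj hw (Subsingleton.elim v w)
    simpa [hv] using T.internalDeg v
  · obtain ⟨w, hw⟩ := T.isTree.exists_vert_degree_one_of_nontrivial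
    obtain ⟨x, -⟩ := T.leavesOnly w (by
      rw [ncard_eq_toFinset_card', toFinset_card, card_neighborSet_eq_degree, hw])
    exact ⟨x⟩

lemma nStates_pos (T : XTree X V) (χ : X → C) : 0 < nStates χ := by
  have := Finite.of_injective T.leaf T.leafInj
  obtain ⟨x⟩ := T.nonempty_taxa
  exact (ncard_pos (finite_range χ)).mpr ⟨χ x, x, rfl⟩

lemma exists_isMPExtension [Nonempty C] (T : XTree X V) (χ : X → C) :
    ∃ ω, IsMPExtension T χ ω := by
  have hext : IsExtension T χ (Function.extend T.leaf χ fun _ => Classical.arbitrary C) :=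
    fun x => T.leafInj.extend_apply _ _ x
  have hne : {n | ∃ ω : V → C, IsExtension T χ ω ∧ (mutationEdges T.g ω).ncard = n}.Nonempty :=
    ⟨_, _, hext, rfl⟩
  exact Nat.sInf_mem hne

lemma apply_eq_of_forest_adj {T : XTree X V} {ω : V → C} {u v : V}
    (h : (forest T ω).Adj u v) : ω u = ω v := by
  by_contra hne
  exact (deleteEdges_adj.mp h).2 ⟨h.1, u, v, rfl, hne⟩

noncomputable def componentState (T : XTree X V) (ω : V → C) : (forest T ω).ConnectedComponent → C :=
  ConnectedComponent.lift ω fun _ _ p _ =>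
    p.reachable.apply_eq_of_forall_adj fun _ _ => apply_eq_of_forest_adj

lemma carries_forest_iff {T : XTree X V} {ω : V → C} {c : (forest T ω).ConnectedComponent}
    {s : C} : carries (forest T ω) ω c s ↔ componentState T ω c = s := by
  induction c using ConnectedComponent.ind with
  | h v => exact ⟨fun ⟨w, hw, hws⟩ => by rw [← hw, ← hws]; rfl, fun h => ⟨v, rfl, h⟩⟩

lemma stateMultiplicity_forest (T : XTree X V) (ω : V → C) (s : C) :
    stateMultiplicity (forest T ω) ω s = (componentState T ω ⁻¹' {s}).ncard := by
  simp only [stateMultiplicity, carries_forest_iff]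
  rfl

lemma card_connectedComponent_forest_le (T : XTree X V) (ω : V → C) :
    Nat.card (forest T ω).ConnectedComponent ≤ (mutationEdges T.g ω).ncard + 1 := by
  have := card_connectedComponent_deleteEdges_le T.g (mutationEdges T.g ω)
  have : Nat.card T.g.ConnectedComponent ≤ 1 := Finite.card_le_one_iff_subsingleton.mpr
    T.isTree.connected.preconnected.subsingleton_connectedComponent
  rw [forest]
  omega

lemma nStates_le_ncard_range_componentState {T : XTree X V} {χ : X → C} {ω : V → C}
    (hω : IsExtension T χ ω) : nStates χ ≤ (range (componentState T ω)).ncard := by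
  refine ncard_le_ncard ?_ (finite_range _)
  rintro _ ⟨x, rfl⟩
  exact ⟨(forest T ω).connectedComponentMk (T.leaf x), hω x⟩

lemma nStates_le_score_add_one (T : XTree X V) (χ : X → C) : nStates χ ≤ score T χ + 1 := by
  rcases isEmpty_or_nonempty X with hX | hX
  · simp [nStates, range_eq_empty]
  have : Nonempty C := hX.map χ
  obtain ⟨ω, hω, hscore⟩ := exists_isMPExtension T χ
  calc nStates χ ≤ (range (componentState T ω)).ncard := nStates_le_ncard_range_componentState hω
    _ ≤ Nat.card (forest T ω).ConnectedComponent := by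
      rw [← Nat.card_coe_set_eq]; exact Finite.card_range_le _
    _ ≤ score T χ + 1 := hscore ▸ card_connectedComponent_forest_le T ω

end PhyloMP

open PhyloMP in
theorem stmt_14_general {X V₁ V₂ C : Type} [Fintype V₁] [Fintype V₂]
    (T₁ : XTree X V₁) (T₂ : XTree X V₂) (χ : X → C)
    (hopt : IsOptimal T₁ T₂ χ) (hconv : IsConvex T₁ χ) :
    score T₂ χ + 1 - nStates χ = dMP T₁ T₂ ∧
    ∀ ω₂ : V₂ → C, IsMPExtension T₂ χ ω₂ →
      nStates χ - dMP T₁ T₂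
          ≤ {s : C | stateMultiplicity (forest T₂ ω₂) ω₂ s = 1}.ncard ∧
      {c : (forest T₂ ω₂).ConnectedComponent |
          ∃ s, carries (forest T₂ ω₂) ω₂ c s ∧ 2 ≤ stateMultiplicity (forest T₂ ω₂) ω₂ s}.ncard
        ≤ 2 * dMP T₁ T₂ := by
  have hhomoplasy : score T₂ χ + 1 - nStates χ = dMP T₁ T₂ := by
    have := nStates_pos T₁ χ
    have := nStates_le_score_add_one T₂ χ
    rw [IsOptimal, hconv, Nat.dist] at hopt
    omega
  refine ⟨hhomoplasy, fun ω₂ hω₂ => ?_⟩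
  have hcomponents := card_connectedComponent_forest_le T₂ ω₂
  have hstates := nStates_le_ncard_range_componentState hω₂.1
  have hrange := Set.two_mul_ncard_range_le (componentState T₂ ω₂)
  have hsplit := Set.ncard_setOf_two_le_add_ncard_setOf_eq_one (componentState T₂ ω₂)
  simp only [stateMultiplicity_forest, carries_forest_iff, exists_eq_left']
  rw [hω₂.2] at hcomponents
  omega

open PhyloMP in
/-- If `χ` is an optimal character convex on `T₁` with at least
`7·d_MP - 4` states, then its homoplasy score on `T₂` equals `d_MP`; consequently any
forest `F₂` induced by a most parsimonious extension of `χ` to `T₂` has at least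
`|χ| - d_MP` unique states and at most `2·d_MP` repeating components. -/
theorem stmt_14 {X V₁ V₂ C : Type} [Fintype V₁] [Fintype V₂]
    (T₁ : XTree X V₁) (T₂ : XTree X V₂) (χ : X → C)
    (hopt : IsOptimal T₁ T₂ χ) (hconv : IsConvex T₁ χ)
    (hst : 7 * dMP T₁ T₂ - 4 ≤ nStates χ) :
    score T₂ χ + 1 - nStates χ = dMP T₁ T₂ ∧
    ∀ ω₂ : V₂ → C, IsMPExtension T₂ χ ω₂ →
      nStates χ - dMP T₁ T₂
          ≤ {s : C | stateMultiplicity (forest T₂ ω₂) ω₂ s = 1}.ncard ∧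
      {c : (forest T₂ ω₂).ConnectedComponent |
          ∃ s, carries (forest T₂ ω₂) ω₂ c s ∧ 2 ≤ stateMultiplicity (forest T₂ ω₂) ω₂ s}.ncard
        ≤ 2 * dMP T₁ T₂ :=
  stmt_14_general T₁ T₂ χ hopt hconv
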